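/- Let f : ℝ → ℝ be the Lipschitz function f(x) = x²/(|x|+2). Then f(0) = 0, the Lipschitz norm of f equals 1, |f'(x)| < 1 for every x ∈ ℝ (so f does not attain its norm locally directionally at any point: for every point x̄ there is a neighborhood on which all slopes are bounded away from 1 in absolute value), yet f attains its pointwise norm at every point p ∈ ℝ: for each p, sup_{q≠p} |f(q)-f(p)|/|q-p| = 1, witnessed by lim_{n→∞} (f(n)-f(p))/(n-p) = 1 when p ≥ 0 and lim_{n→∞} |f(p)-f(-n)|/(p+n) = 1 when p < 0. -/
import Mathlib


open Filter Metric MeasureTheory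

noncomputable def lipNorm {M : Type*} [MetricSpace M] (f : M → ℝ) : ℝ :=
  sSup {r : ℝ | ∃ p q : M, p ≠ q ∧ r = |f q - f p| / dist p q}

noncomputable def pnormAt {M : Type*} [MetricSpace M] (f : M → ℝ) (p : M) : ℝ :=
  sSup {r : ℝ | ∃ q : M, q ≠ p ∧ r = |f q - f p| / dist p q}

/-- `f` strongly attains its (Lipschitz) norm. -/
def StronglyAttains {M : Type*} [MetricSpace M] (f : M → ℝ) : Prop :=
  ∃ p q : M, p ≠ q ∧ |f q - f p| / dist p q = lipNorm f

/-- `f` attains its pointwise norm. -/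
def PointwiseAttains {M : Type*} [MetricSpace M] (f : M → ℝ) : Prop :=
  ∃ p : M, pnormAt f p = lipNorm f

noncomputable def Fa : ℝ → ℝ := fun x => x ^ 2 / (|x| + 2)
noncomputable def Fd : ℝ → ℝ := fun x => (x * |x| + 4 * x) / ((|x| + 2) ^ 2)

lemma habs (x : ℝ) : (0:ℝ) < |x| + 2 := by positivity

lemma Fd_abs (x : ℝ) : |Fd x| = 1 - 4 / ((|x| + 2) ^ 2) := by
  have h := habs x
  have h1 : |Fd x| = (|x| * (|x| + 4)) / ((|x| + 2) ^ 2) := by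
    unfold Fd
    rw [abs_div, abs_of_pos (by positivity : (0:ℝ) < (|x|+2)^2)]
    congr 1
    have : x * |x| + 4 * x = x * (|x| + 4) := by ring
    rw [this, abs_mul, abs_of_pos (by positivity : (0:ℝ) < |x| + 4)]
  rw [h1]
  field_simp
  ring

lemma hasDeriv_Fa (x : ℝ) : HasDerivAt Fa (Fd x) x := by
  rcases lt_trichotomy x 0 with hx | rfl | hx
  · have h2 : (0:ℝ) < -x + 2 := by linarith
    have hg : HasDerivAt (fun y : ℝ => y ^ 2 / (-y + 2))
        (((2:ℕ) * x ^ 1 * (-x + 2) - x ^ 2 * (-1)) / (-x + 2) ^ 2) x := by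
      exact (hasDerivAt_pow 2 x).div (((hasDerivAt_id x).neg).add_const 2) (by linarith)
    have heq : Fa =ᶠ[nhds x] (fun y : ℝ => y ^ 2 / (-y + 2)) := by
      filter_upwards [eventually_lt_nhds hx] with y hy
      simp [Fa, abs_of_neg hy]
    refine (hg.congr_of_eventuallyEq heq).congr_deriv ?_
    rw [Fd]
    rw [abs_of_neg hx]
    field_simp
    ring
  · have h0 : HasDerivAt Fa (Fd 0) 0 := by
      rw [hasDerivAt_iff_tendsto_slope]
      have hc : ContinuousAt (fun y : ℝ => y / (|y| + 2)) 0 := by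
        apply ContinuousAt.div continuousAt_id
        · exact (continuous_abs.continuousAt).add continuousAt_const
        · norm_num
      have h0' : Fd 0 = (fun y : ℝ => y / (|y| + 2)) 0 := by simp [Fd]
      rw [h0']
      refine Tendsto.congr' ?_ (hc.continuousWithinAt.tendsto)
      filter_upwards [self_mem_nhdsWithin] with y hy
      simp only [Set.mem_compl_iff, Set.mem_singleton_iff] at hy
      have h2 : |y| + 2 ≠ 0 := by positivity
      simp only [slope_def_field, Fa]
      rw [sub_zero]
      field_simp
      ring
    exact h0
  · have hg : HasDerivAt (fun y : ℝ => y ^ 2 / (y + 2))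
        (((2:ℕ) * x ^ 1 * (x + 2) - x ^ 2 * 1) / (x + 2) ^ 2) x := by
      exact (hasDerivAt_pow 2 x).div ((hasDerivAt_id x).add_const 2) (by linarith)
    have heq : Fa =ᶠ[nhds x] (fun y : ℝ => y ^ 2 / (y + 2)) := by
      filter_upwards [eventually_gt_nhds hx] with y hy
      simp [Fa, abs_of_pos hy]
    refine (hg.congr_of_eventuallyEq heq).congr_deriv ?_
    rw [Fd, abs_of_pos hx]
    field_simp
    ring

lemma Fd_lt_one (x : ℝ) : |Fd x| < 1 := by
  rw [Fd_abs]
  have : (0:ℝ) < 4 / ((|x| + 2) ^ 2) := by positivity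
  linarith

lemma Fa_mvt {s : Set ℝ} (hs : Convex ℝ s) {C : ℝ} (hC : ∀ x ∈ s, |Fd x| ≤ C)
    {p q : ℝ} (hp : p ∈ s) (hq : q ∈ s) : |Fa q - Fa p| ≤ C * |q - p| := by
  have := hs.norm_image_sub_le_of_norm_hasDerivWithin_le
    (f := Fa) (f' := Fd) (C := C)
    (fun x hx => (hasDeriv_Fa x).hasDerivWithinAt) (fun x hx => by
      rw [Real.norm_eq_abs]; exact hC x hx) hp hq
  simpa [Real.norm_eq_abs] using this

lemma Fa_lip (p q : ℝ) : |Fa q - Fa p| ≤ |q - p| := by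
  simpa using Fa_mvt convex_univ (fun x _ => (Fd_lt_one x).le) (Set.mem_univ p) (Set.mem_univ q)

lemma Fd_bound (x₀ x : ℝ) (h : |x - x₀| < 1) : |Fd x| ≤ 1 - 4 / ((|x₀| + 3) ^ 2) := by
  rw [Fd_abs]
  have h1 : |x| + 2 ≤ |x₀| + 3 := by
    have := abs_sub_abs_le_abs_sub x x₀
    linarith
  have h2 : (0:ℝ) < |x| + 2 := habs x
  gcongr

lemma aux_tendsto (c p : ℝ) :
    Tendsto (fun x : ℝ => (x ^ 2 / (x + 2) - c) / (x - p)) atTop (nhds 1) := by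
  have hden : Tendsto (fun x : ℝ => x - p) atTop atTop :=
    tendsto_atTop_add_const_right _ (-p) tendsto_id
  have hnum : Tendsto (fun x : ℝ => x ^ 2 / (x + 2) - c - (x - p)) atTop (nhds (p - c - 2)) := by
    have h4 : Tendsto (fun x : ℝ => 4 / (x + 2) + (p - c - 2)) atTop (nhds (0 + (p - c - 2))) := by
      apply Tendsto.add_const
      exact Tendsto.div_atTop tendsto_const_nhds (tendsto_atTop_add_const_right _ 2 tendsto_id)
    rw [show p - c - 2 = 0 + (p - c - 2) by ring]
    refine Tendsto.congr' ?_ h4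
    filter_upwards [eventually_gt_atTop (-2 : ℝ)] with x hx
    have h2 : x + 2 ≠ 0 := by linarith
    field_simp
    ring
  have h0 := (hnum.div_atTop hden).add_const 1
  rw [zero_add] at h0
  refine Tendsto.congr' ?_ h0
  filter_upwards [eventually_gt_atTop p] with x hx
  have hxp : x - p ≠ 0 := by simp only [ne_eq, sub_eq_zero]; intro h; linarith
  rw [sub_div, div_self hxp]
  ring

lemma tendsto6 (p : ℝ) : Tendsto (fun n : ℕ => (Fa n - Fa p) / ((n : ℝ) - p)) atTop (nhds 1) := by
  have h := (aux_tendsto (Fa p) p).comp tendsto_natCast_atTop_atTop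
  refine h.congr fun n => ?_
  simp only [Function.comp_apply, Fa, Nat.abs_cast]

lemma Fa_le_abs (p : ℝ) : Fa p ≤ |p| := by
  have h := habs p
  rw [Fa, div_le_iff₀ h]
  nlinarith [sq_abs p, abs_nonneg p]

lemma Fa_neg_ge (p : ℝ) (n : ℕ) (hn : |p| + 2 ≤ (n : ℝ)) : Fa p ≤ Fa (-(n : ℝ)) := by
  have h1 : Fa (-(n : ℝ)) = (n : ℝ) ^ 2 / ((n : ℝ) + 2) := by
    simp [Fa, abs_of_nonneg (by positivity : (0:ℝ) ≤ (n:ℝ))]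
  have h2 : (0:ℝ) < (n : ℝ) + 2 := by positivity
  have h3 : (n : ℝ) - 2 ≤ (n : ℝ) ^ 2 / ((n : ℝ) + 2) := by
    rw [le_div_iff₀ h2]; nlinarith
  have h4 := Fa_le_abs p
  have h5 : |p| ≤ (n : ℝ) - 2 := by linarith
  linarith [h1 ▸ h3]

lemma tendsto7 (p : ℝ) :
    Tendsto (fun n : ℕ => |Fa p - Fa (-(n : ℝ))| / (p + n)) atTop (nhds 1) := by
  have h := (aux_tendsto (Fa p) (-p)).comp tendsto_natCast_atTop_atTop
  refine Tendsto.congr' ?_ h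
  filter_upwards [tendsto_natCast_atTop_atTop.eventually_ge_atTop (|p| + 2)] with n hn
  have h1 : Fa (-(n : ℝ)) = (n : ℝ) ^ 2 / ((n : ℝ) + 2) := by
    simp [Fa, abs_of_nonneg (by positivity : (0:ℝ) ≤ (n:ℝ))]
  have h2 := Fa_neg_ge p n hn
  rw [Function.comp_apply, abs_of_nonpos (by linarith), h1, sub_neg_eq_add]
  rw [neg_sub, add_comm p]

lemma lip_set_bdd : ∀ r ∈ {r : ℝ | ∃ p q : ℝ, p ≠ q ∧ r = |Fa q - Fa p| / dist p q}, r ≤ 1 := by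
  rintro r ⟨p, q, hpq, rfl⟩
  rw [Real.dist_eq]
  have hd : 0 < |p - q| := abs_pos.2 (sub_ne_zero.2 hpq)
  rw [div_le_one hd]
  calc |Fa q - Fa p| ≤ |q - p| := Fa_lip p q
    _ = |p - q| := abs_sub_comm q p

lemma pnorm_set_bdd (p : ℝ) :
    ∀ r ∈ {r : ℝ | ∃ q : ℝ, q ≠ p ∧ r = |Fa q - Fa p| / dist p q}, r ≤ 1 := by
  rintro r ⟨q, hpq, rfl⟩
  rw [Real.dist_eq]
  have hd : 0 < |p - q| := abs_pos.2 (sub_ne_zero.2 (fun h => hpq (by linarith [h] : q = p)))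
  rw [div_le_one hd]
  calc |Fa q - Fa p| ≤ |q - p| := Fa_lip p q
    _ = |p - q| := abs_sub_comm q p

lemma pnormAt_Fa (p : ℝ) : pnormAt Fa p = 1 := by
  have hbdd : BddAbove {r : ℝ | ∃ q : ℝ, q ≠ p ∧ r = |Fa q - Fa p| / dist p q} :=
    ⟨1, fun r hr => pnorm_set_bdd p r hr⟩
  refine le_antisymm (csSup_le ⟨|Fa (p + 1) - Fa p| / dist p (p + 1), p + 1, by norm_num, rfl⟩
    (pnorm_set_bdd p)) ?_
  rcases le_or_gt 0 p with hp | hp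
  · refine le_of_tendsto (tendsto6 p) ?_
    filter_upwards [tendsto_natCast_atTop_atTop.eventually_gt_atTop p] with n hn
    have hd : dist p (n : ℝ) = (n : ℝ) - p := by
      rw [Real.dist_eq, abs_sub_comm, abs_of_pos (by linarith)]
    have hmem : |Fa n - Fa p| / dist p (n : ℝ) ∈
        {r : ℝ | ∃ q : ℝ, q ≠ p ∧ r = |Fa q - Fa p| / dist p q} :=
      ⟨(n : ℝ), ne_of_gt hn, rfl⟩
    calc (Fa n - Fa p) / ((n : ℝ) - p) ≤ |Fa n - Fa p| / ((n : ℝ) - p) := by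
          have hdp : (0:ℝ) < (n : ℝ) - p := by linarith
          gcongr
          exact le_abs_self _
      _ = |Fa n - Fa p| / dist p (n : ℝ) := by rw [hd]
      _ ≤ _ := le_csSup hbdd hmem
  · refine le_of_tendsto (tendsto7 p) ?_
    filter_upwards [tendsto_natCast_atTop_atTop.eventually_gt_atTop (-p)] with n hn
    have hq : -(n : ℝ) ≠ p := by intro h; rw [← h] at hn; linarith
    have hd : dist p (-(n : ℝ)) = p + n := by
      rw [Real.dist_eq, abs_of_pos (by linarith : (0:ℝ) < p - -(n:ℝ))]; ring
    have hmem : |Fa (-(n : ℝ)) - Fa p| / dist p (-(n : ℝ)) ∈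
        {r : ℝ | ∃ q : ℝ, q ≠ p ∧ r = |Fa q - Fa p| / dist p q} := ⟨-(n : ℝ), hq, rfl⟩
    calc |Fa p - Fa (-(n : ℝ))| / (p + n)
        = |Fa (-(n : ℝ)) - Fa p| / dist p (-(n : ℝ)) := by rw [hd, abs_sub_comm]
      _ ≤ _ := le_csSup hbdd hmem

/-- f(x) = x²/(|x|+2) vanishes at 0, has Lipschitz norm 1, everywhere
a derivative of absolute value < 1 (and around every point all slopes are bounded
away from 1, so f ∉ LDirA(ℝ)), yet f attains its pointwise norm at every p ∈ ℝ,
witnessed by the stated limits. -/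
theorem stmt19 (f : ℝ → ℝ) (hf : ∀ x : ℝ, f x = x ^ 2 / (|x| + 2)) :
    f 0 = 0 ∧ lipNorm f = 1 ∧
    (∀ x : ℝ, ∃ d : ℝ, HasDerivAt f d x ∧ |d| < 1) ∧
    (∀ x₀ : ℝ, ∃ c : ℝ, c < 1 ∧ ∃ δ > (0:ℝ), ∀ p q : ℝ, p ≠ q →
      |p - x₀| < δ → |q - x₀| < δ → |f q - f p| / |q - p| ≤ c) ∧
    (∀ p : ℝ, pnormAt f p = 1) ∧
    (∀ p : ℝ, 0 ≤ p → Tendsto (fun n : ℕ => (f n - f p) / ((n : ℝ) - p)) atTop (nhds 1)) ∧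
    (∀ p : ℝ, p < 0 → Tendsto (fun n : ℕ => |f p - f (-(n : ℝ))| / (p + n)) atTop (nhds 1)) := by
  have hFa : f = Fa := funext hf
  subst hFa
  refine ⟨by simp [Fa], ?_, ?_, ?_, pnormAt_Fa, fun p _ => tendsto6 p, fun p _ => tendsto7 p⟩
  · -- lipNorm = 1
    have hbdd : BddAbove {r : ℝ | ∃ p q : ℝ, p ≠ q ∧ r = |Fa q - Fa p| / dist p q} :=
      ⟨1, fun r hr => lip_set_bdd r hr⟩
    refine le_antisymm (csSup_le ⟨|Fa 1 - Fa 0| / dist (0:ℝ) 1, 0, 1, by norm_num, rfl⟩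
      lip_set_bdd) ?_
    refine le_of_tendsto (tendsto6 0) ?_
    filter_upwards [tendsto_natCast_atTop_atTop.eventually_gt_atTop (0:ℝ)] with n hn
    have hd : dist (0:ℝ) (n : ℝ) = (n : ℝ) - 0 := by
      rw [Real.dist_eq, abs_sub_comm, abs_of_pos (by linarith)]
    have hmem : |Fa n - Fa 0| / dist (0:ℝ) (n : ℝ) ∈
        {r : ℝ | ∃ p q : ℝ, p ≠ q ∧ r = |Fa q - Fa p| / dist p q} :=
      ⟨0, (n : ℝ), by intro h; exact absurd h (by linarith [hn]), rfl⟩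
    calc (Fa n - Fa 0) / ((n : ℝ) - 0) ≤ |Fa n - Fa 0| / ((n : ℝ) - 0) := by
          have hdp : (0:ℝ) < (n : ℝ) - 0 := by linarith
          gcongr
          exact le_abs_self _
      _ = |Fa n - Fa 0| / dist (0:ℝ) (n : ℝ) := by rw [hd]
      _ ≤ _ := le_csSup hbdd hmem
  · exact fun x => ⟨Fd x, hasDeriv_Fa x, Fd_lt_one x⟩
  · intro x₀
    refine ⟨1 - 4 / ((|x₀| + 3) ^ 2), by
      have : (0:ℝ) < 4 / ((|x₀| + 3) ^ 2) := by positivity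
      linarith, 1, one_pos, fun p q hpq hp hq => ?_⟩
    have hd : 0 < |q - p| := abs_pos.2 (sub_ne_zero.2 (fun h => hpq (by linarith [h] : p = q)))
    rw [div_le_iff₀ hd]
    exact Fa_mvt (convex_ball x₀ 1) (fun x hx => Fd_bound x₀ x (by rwa [mem_ball, Real.dist_eq] at hx))
      (by rwa [mem_ball, Real.dist_eq]) (by rwa [mem_ball, Real.dist_eq])
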